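/- arXiv:1803.10627 — 5 statements merged into one kernel-verified Lean document; each statement's English description precedes it below -/
import Mathlib

section
/- A square matrix over a ring that is hollow (contains a k × l block of zeros with k + l > n) is not full, i.e., it factors as a product of an n × m and an m × n matrix with m < n. -/
/-!
Split `A = B + C`, where `B` keeps the columns of `A` outside `J` and `C` the columns in `J`.
The columns of `B` are supported on `Jᶜ`, and since `A` vanishes on `I × J` the rows of `C` are
supported on `Iᶜ`; so `B` and `C` factor through `|Jᶜ|` and `|Iᶜ|` inner dimensions, and `A`
through `|Jᶜ| + |Iᶜ| = 2n - |I| - |J| < n`.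
-/

namespace Matrix

variable {R m n : Type*} [Semiring R]

def FactorsThrough (A : Matrix m n R) (k : ℕ) : Prop :=
  ∃ (T : Matrix m (Fin k) R) (U : Matrix (Fin k) n R), A = T * U

theorem FactorsThrough.of_mul {κ : Type*} [Fintype κ] (T : Matrix m κ R) (U : Matrix κ n R) :
    (T * U).FactorsThrough (Fintype.card κ) := by
  let e := Fintype.equivFin κ
  exact ⟨T.submatrix id e.symm, U.submatrix e.symm id, by
    rw [submatrix_mul_equiv, submatrix_id_id]⟩

theorem FactorsThrough.add {A B : Matrix m n R} {k l : ℕ}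
    (hA : A.FactorsThrough k) (hB : B.FactorsThrough l) : (A + B).FactorsThrough (k + l) := by
  obtain ⟨T₁, U₁, rfl⟩ := hA
  obtain ⟨T₂, U₂, rfl⟩ := hB
  simpa [← fromCols_mul_fromRows] using FactorsThrough.of_mul (fromCols T₁ T₂) (fromRows U₁ U₂)

theorem factorsThrough_of_cols_supported [DecidableEq n] {A : Matrix m n R} (S : Finset n)
    (hA : ∀ i, ∀ j ∉ S, A i j = 0) : A.FactorsThrough S.card := by
  convert FactorsThrough.of_mul (A.submatrix id ((↑) : S → n))
    ((1 : Matrix n n R).submatrix (↑) id) using 1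
  · ext i j
    simp only [mul_apply, submatrix_apply, id, one_apply, mul_ite, mul_one, mul_zero]
    rw [Finset.sum_coe_sort S fun k => if k = j then A i k else 0, Finset.sum_ite_eq']
    split_ifs with hj
    exacts [rfl, hA i j hj]
  · simp

theorem factorsThrough_of_rows_supported [DecidableEq m] {A : Matrix m n R} (S : Finset m)
    (hA : ∀ i ∉ S, ∀ j, A i j = 0) : A.FactorsThrough S.card := by
  convert FactorsThrough.of_mul ((1 : Matrix m m R).submatrix id ((↑) : S → m))
    (A.submatrix (↑) id) using 1
  · ext i j
    simp only [mul_apply, submatrix_apply, id, one_apply, ite_mul, one_mul, zero_mul]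
    rw [Finset.sum_coe_sort S fun k => if i = k then A k j else 0, Finset.sum_ite_eq]
    split_ifs with hi
    exacts [rfl, hA i hi j]
  · simp

end Matrix

/-- A hollow square matrix over a ring is not full: it factors through a
smaller rectangular shape. -/
theorem hollow_not_full {R : Type*} [Ring R] {n : ℕ}
    (A : Matrix (Fin n) (Fin n) R)
    (I J : Finset (Fin n)) (hcard : n < I.card + J.card)
    (hzero : ∀ i ∈ I, ∀ j ∈ J, A i j = 0) :
    ∃ m : ℕ, m < n ∧ ∃ (T : Matrix (Fin n) (Fin m) R) (U : Matrix (Fin m) (Fin n) R),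
      A = T * U := by
  let B : Matrix (Fin n) (Fin n) R := Matrix.of fun i j => if j ∈ J then 0 else A i j
  let C : Matrix (Fin n) (Fin n) R := Matrix.of fun i j => if j ∈ J then A i j else 0
  have hB : B.FactorsThrough Jᶜ.card :=
    Matrix.factorsThrough_of_cols_supported Jᶜ fun i j hj => if_pos (by simpa using hj)
  have hC : C.FactorsThrough Iᶜ.card :=
    Matrix.factorsThrough_of_rows_supported Iᶜ fun i hi j => by
      by_cases hj : j ∈ J
      · simpa [C, hj] using hzero i (by simpa using hi) j hj
      · simp [C, hj]
  have hA : A = B + C := by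
    ext i j
    by_cases hj : j ∈ J <;> simp [B, C, hj]
  refine ⟨Jᶜ.card + Iᶜ.card, ?_, hA ▸ hB.add hC⟩
  have hI : I.card ≤ n := by simpa using I.card_le_univ
  have hJ : J.card ≤ n := by simpa using J.card_le_univ
  simp only [Finset.card_compl, Fintype.card_fin]
  omega
end

section
/- Given linear representations (u_f, A_f, v_f) of f and (u_g, A_g, v_g) of g over a skew field, the block matrix [[A_f, -v_f u_g],[0, A_g]] is invertible and ([u_f, 0], [[A_f, -v_f u_g],[0, A_g]], [0; v_g]) is a linear representation of the product f·g. -/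
open Matrix

/-!
Over any ring, an upper block-triangular matrix with invertible diagonal blocks `A`, `D` is
invertible, with inverse `[[A⁻¹, -A⁻¹ B D⁻¹], [0, D⁻¹]]`. Sandwiching this inverse between the row
`[u_f, 0]` and the column `[0; v_g]` picks out its upper-right block, which for
`B = -v_f u_g` is `A_f⁻¹ v_f u_g A_g⁻¹`; so the entry is `(u_f A_f⁻¹ v_f) (u_g A_g⁻¹ v_g) = f g`.
-/

open scoped Ring

namespace Matrix

section BlockTriangular

variable {m n α : Type*} [Fintype m] [Fintype n] [DecidableEq m] [DecidableEq n] [Ring α]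
  {A : Matrix m m α} {D : Matrix n n α}

noncomputable def fromBlocksZero₂₁Unit (hA : IsUnit A) (B : Matrix m n α) (hD : IsUnit D) :
    (Matrix (m ⊕ n) (m ⊕ n) α)ˣ where
  val := fromBlocks A B 0 D
  inv := fromBlocks A⁻¹ʳ (-(A⁻¹ʳ * B * D⁻¹ʳ)) 0 D⁻¹ʳ
  val_inv := by
    simp only [fromBlocks_multiply, Matrix.mul_zero, Matrix.zero_mul, zero_add, add_zero,
      Matrix.mul_neg, neg_zero, ← Matrix.mul_assoc, Ring.mul_inverse_cancel _ hA,
      Ring.mul_inverse_cancel _ hD, Matrix.one_mul, neg_add_cancel, fromBlocks_one]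
  inv_val := by
    simp only [fromBlocks_multiply, Matrix.mul_zero, Matrix.zero_mul, zero_add, add_zero,
      Matrix.neg_mul, Ring.inverse_mul_cancel _ hA, Ring.inverse_mul_cancel _ hD, Matrix.mul_assoc,
      Matrix.mul_one, add_neg_cancel, fromBlocks_one]

theorem isUnit_fromBlocks_zero₂₁_of_isUnit (hA : IsUnit A) (B : Matrix m n α) (hD : IsUnit D) :
    IsUnit (fromBlocks A B 0 D) :=
  (fromBlocksZero₂₁Unit hA B hD).isUnit

theorem inverse_fromBlocks_zero₂₁ (hA : IsUnit A) (B : Matrix m n α) (hD : IsUnit D) :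
    (fromBlocks A B 0 D)⁻¹ʳ = fromBlocks A⁻¹ʳ (-(A⁻¹ʳ * B * D⁻¹ʳ)) 0 D⁻¹ʳ :=
  Ring.inverse_unit (fromBlocksZero₂₁Unit hA B hD)

end BlockTriangular

theorem fromCols_zero_mul_fromBlocks_mul_zero_fromRows {l m n o p α : Type*} [Fintype m]
    [Fintype n] [Fintype o] [Fintype p] [Semiring α] (u : Matrix l m α)
    (P : Matrix m o α) (Q : Matrix m p α) (R : Matrix n o α) (S : Matrix n p α)
    (w : Matrix p l α) :
    fromCols u (0 : Matrix l n α) * fromBlocks P Q R S * fromRows (0 : Matrix o l α) w =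
      u * Q * w := by
  simp only [fromCols_mul_fromBlocks, fromCols_mul_fromRows, Matrix.zero_mul, Matrix.mul_zero,
    add_zero, zero_add]

end Matrix

/-- The block construction for the product of two elements given by linear
representations: `([u_f, 0], [[A_f, -v_f u_g],[0, A_g]], [0; v_g])`
is a linear representation of `f·g`. -/
theorem product_representation {K F : Type*} [Field K] [DivisionRing F] [Algebra K F]
    {nf ng : ℕ}
    (uf : Matrix (Fin 1) (Fin nf) K) (vf : Matrix (Fin nf) (Fin 1) K)
    (Af : Matrix (Fin nf) (Fin nf) F) (hAf : IsUnit Af)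
    (ug : Matrix (Fin 1) (Fin ng) K) (vg : Matrix (Fin ng) (Fin 1) K)
    (Ag : Matrix (Fin ng) (Fin ng) F) (hAg : IsUnit Ag)
    (f g : F)
    (hf : ((uf.map ⇑(algebraMap K F)) * Ring.inverse Af * (vf.map ⇑(algebraMap K F))) 0 0 = f)
    (hg : ((ug.map ⇑(algebraMap K F)) * Ring.inverse Ag * (vg.map ⇑(algebraMap K F))) 0 0 = g) :
    let B : Matrix (Fin nf ⊕ Fin ng) (Fin nf ⊕ Fin ng) F :=
      Matrix.fromBlocks Af
        (-((vf.map ⇑(algebraMap K F)) * (ug.map ⇑(algebraMap K F)))) 0 Ag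
    let u : Matrix (Fin 1) (Fin nf ⊕ Fin ng) F :=
      Matrix.of fun i j => Sum.elim (fun a => (uf.map ⇑(algebraMap K F)) i a) (fun _ => 0) j
    let w : Matrix (Fin nf ⊕ Fin ng) (Fin 1) F :=
      Matrix.of fun i j =>
        Sum.elim (fun _ => 0) (fun b => (vg.map ⇑(algebraMap K F)) b j) i
    IsUnit B ∧ (u * Ring.inverse B * w) 0 0 = f * g := by
  set uf' := uf.map ⇑(algebraMap K F)
  set vf' := vf.map ⇑(algebraMap K F)
  set ug' := ug.map ⇑(algebraMap K F)
  set vg' := vg.map ⇑(algebraMap K F)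
  intro B u w
  have hu : u = fromCols uf' 0 := rfl
  have hw : w = fromRows 0 vg' := by ext (_ | _) _ <;> rfl
  refine ⟨isUnit_fromBlocks_zero₂₁_of_isUnit hAf _ hAg, ?_⟩
  have hcorner : u * B⁻¹ʳ * w = (uf' * Af⁻¹ʳ * vf') * (ug' * Ag⁻¹ʳ * vg') := by
    rw [hu, hw, inverse_fromBlocks_zero₂₁ hAf _ hAg, fromCols_zero_mul_fromBlocks_mul_zero_fromRows]
    simp only [Matrix.mul_neg, Matrix.neg_mul, neg_neg, Matrix.mul_assoc]
  rw [hcorner, mul_apply, Fin.sum_univ_one, hf, hg]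
end

section
/- Given a linear representation (u_f, A_f, v_f) of a nonzero element f of a skew field, the block matrix [[-v_f, A_f],[0, u_f]] is invertible and ([1, 0,…,0], [[-v_f, A_f],[0, u_f]], [0,…,0, 1]ᵀ) is a linear representation of f⁻¹. -/
/-!
The Schur-complement inversion of a 2 × 2 block matrix needs no commutativity: if `A` and
`S = D - C A⁻¹ B` are invertible, the LDU factorisation of `[[A, B], [C, D]]` through `S` exhibits
an inverse whose bottom-right block is `S⁻¹`. Up to the order of the columns, the matrix of the
theorem is `[[A_f, -v_f], [u_f, 0]]`, whose Schur complement is the `1 × 1` matrix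
`u_f A_f⁻¹ v_f = f`. As `f ≠ 0` the matrix is invertible, and the entry of its inverse picked out
by the two unit vectors is the bottom-right one, `f⁻¹`.
-/

namespace Matrix

section Ring

-- Mathlib's `Matrix.fromBlocks₁₁Invertible` is stated over commutative rings only.

variable {m n α : Type*} [Fintype m] [Fintype n] [DecidableEq m] [DecidableEq n] [Ring α]

abbrev lowerUnitriangularInvertible (X : Matrix n m α) :
    Invertible (fromBlocks 1 0 X 1 : Matrix (m ⊕ n) (m ⊕ n) α) where
  invOf := fromBlocks 1 0 (-X) 1
  invOf_mul_self := by simp [fromBlocks_multiply]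
  mul_invOf_self := by simp [fromBlocks_multiply]

abbrev upperUnitriangularInvertible (Y : Matrix m n α) :
    Invertible (fromBlocks 1 Y 0 1 : Matrix (m ⊕ n) (m ⊕ n) α) where
  invOf := fromBlocks 1 (-Y) 0 1
  invOf_mul_self := by simp [fromBlocks_multiply]
  mul_invOf_self := by simp [fromBlocks_multiply]

abbrev fromBlocksDiagonalInvertible (A : Matrix m m α) (D : Matrix n n α) [Invertible A]
    [Invertible D] : Invertible (fromBlocks A 0 0 D) where
  invOf := fromBlocks (⅟A) 0 0 (⅟D)
  invOf_mul_self := by simp [fromBlocks_multiply]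
  mul_invOf_self := by simp [fromBlocks_multiply]

theorem fromBlocks_eq_ldu (A : Matrix m m α) (B : Matrix m n α) (C : Matrix n m α)
    (D : Matrix n n α) [Invertible A] :
    fromBlocks A B C D =
      fromBlocks 1 0 (C * ⅟A) 1 * fromBlocks A 0 0 (D - C * ⅟A * B) *
        fromBlocks 1 (⅟A * B) 0 1 := by
  simp only [fromBlocks_multiply, Matrix.mul_zero, Matrix.zero_mul, add_zero, zero_add,
    Matrix.one_mul, Matrix.mul_one, invOf_mul_self, Matrix.mul_invOf_cancel_left,
    Matrix.mul_assoc, add_sub_cancel]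

abbrev fromBlocksInvertibleOfSchur (A : Matrix m m α) (B : Matrix m n α) (C : Matrix n m α)
    (D : Matrix n n α) [Invertible A] [Invertible (D - C * ⅟A * B)] :
    Invertible (fromBlocks A B C D) :=
  letI := lowerUnitriangularInvertible (C * ⅟A)
  letI := fromBlocksDiagonalInvertible A (D - C * ⅟A * B)
  letI := upperUnitriangularInvertible (⅟A * B)
  letI := invertibleMul (fromBlocks 1 0 (C * ⅟A) 1) (fromBlocks A 0 0 (D - C * ⅟A * B))
  Invertible.copy' (invertibleMul _ (fromBlocks 1 (⅟A * B) 0 1)) _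
    (fromBlocks (⅟A + ⅟A * B * ⅟(D - C * ⅟A * B) * C * ⅟A) (-(⅟A * B * ⅟(D - C * ⅟A * B)))
      (-(⅟(D - C * ⅟A * B) * C * ⅟A)) (⅟(D - C * ⅟A * B)))
    (fromBlocks_eq_ldu A B C D) <| by
      show _ = fromBlocks 1 (-(⅟A * B)) 0 1 *
        (fromBlocks (⅟A) 0 0 (⅟(D - C * ⅟A * B)) * fromBlocks 1 0 (-(C * ⅟A)) 1)
      simp only [fromBlocks_multiply, Matrix.one_mul, Matrix.mul_one, Matrix.zero_mul,
        Matrix.mul_zero, add_zero, zero_add, neg_zero, Matrix.mul_neg, Matrix.neg_mul, neg_neg,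
        Matrix.mul_assoc]

theorem invOf_fromBlocks_eq_of_schur (A : Matrix m m α) (B : Matrix m n α) (C : Matrix n m α)
    (D : Matrix n n α) [Invertible A] [Invertible (D - C * ⅟A * B)]
    [Invertible (fromBlocks A B C D)] :
    ⅟(fromBlocks A B C D) =
      fromBlocks (⅟A + ⅟A * B * ⅟(D - C * ⅟A * B) * C * ⅟A) (-(⅟A * B * ⅟(D - C * ⅟A * B)))
        (-(⅟(D - C * ⅟A * B) * C * ⅟A)) (⅟(D - C * ⅟A * B)) := by
  have : ‹Invertible (fromBlocks A B C D)› = fromBlocksInvertibleOfSchur A B C D :=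
    Subsingleton.elim _ _
  rw [this]
  rfl

end Ring

abbrev invertibleOfUnique {ι α : Type*} [Unique ι] [Fintype ι] [DecidableEq ι] [Semiring α]
    (M : Matrix ι ι α) [Invertible (M default default)] : Invertible M where
  invOf := of fun _ _ => ⅟(M default default)
  invOf_mul_self := by
    ext i j
    rw [Subsingleton.elim i default, Subsingleton.elim j default]
    simp [mul_apply]
  mul_invOf_self := by
    ext i j
    rw [Subsingleton.elim i default, Subsingleton.elim j default]
    simp [mul_apply]

end Matrix

open Matrix

/-- The column index `Sum.inr _` corresponds to the first column `[-v_f; 0]` and `Sum.inl k` to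
the column of `[A_f; u_f]`. -/
theorem inverse_representation {K F : Type*} [Field K] [DivisionRing F] [Algebra K F]
    {n : ℕ}
    (uf : Matrix (Fin 1) (Fin n) K) (vf : Matrix (Fin n) (Fin 1) K)
    (Af : Matrix (Fin n) (Fin n) F) (hAf : IsUnit Af)
    (f : F) (hf0 : f ≠ 0)
    (hf : ((uf.map ⇑(algebraMap K F)) * Ring.inverse Af * (vf.map ⇑(algebraMap K F))) 0 0 = f) :
    let B : Matrix (Fin n ⊕ Fin 1) (Fin n ⊕ Fin 1) F :=
      (Matrix.fromBlocks (-(vf.map ⇑(algebraMap K F))) Af 0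
        (uf.map ⇑(algebraMap K F))).submatrix id Sum.swap
    let u : Matrix (Fin 1) (Fin n ⊕ Fin 1) F :=
      Matrix.of fun _ j => Sum.elim (fun _ => (0 : F)) (fun _ => (1 : F)) j
    let w : Matrix (Fin n ⊕ Fin 1) (Fin 1) F :=
      Matrix.of fun i _ => Sum.elim (fun _ => (0 : F)) (fun _ => (1 : F)) i
    IsUnit B ∧ (u * Ring.inverse B * w) 0 0 = f⁻¹ := by
  intro B u w
  set u' := uf.map ⇑(algebraMap K F)
  set v' := vf.map ⇑(algebraMap K F)
  have hB : B = fromBlocks Af (-v') u' 0 :=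
    (fromBlocks_submatrix_sum_swap_right _ _ _ _ _).trans (submatrix_id_id _)
  have huw : ∀ X : Matrix (Fin n ⊕ Fin 1) (Fin n ⊕ Fin 1) F,
      (u * X * w) 0 0 = X (Sum.inr 0) (Sum.inr 0) := by
    intro X
    simp [mul_apply, u, w, Fintype.sum_sum_type]
  let := hAf.invertible
  set S : Matrix (Fin 1) (Fin 1) F := 0 - u' * ⅟Af * -v' with hS_def
  have hS : S 0 0 = f := by
    rwa [hS_def, zero_sub, Matrix.mul_neg, neg_neg, ← Ring.inverse_invertible]
  let : Invertible (S default default) := invertibleOfNonzero (hS ▸ hf0)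
  let := invertibleOfUnique S
  let := fromBlocksInvertibleOfSchur Af (-v') u' 0
  rw [hB, huw, Ring.inverse_invertible, invOf_fromBlocks_eq_of_schur, fromBlocks_apply₂₂]
  exact ⟨isUnit_of_invertible _, (invOf_eq_inv _).trans (congrArg _ hS)⟩
end

section
/- If f is an element of the free field given by a minimal linear representation of dimension n whose system matrix can be brought (by scalar transformations) to a form with first column e₁ = [1,0,…,0]ᵀ and last row e_nᵀ (type (1,1)), then f⁻¹ has a linear representation of dimension n − 1; in particular rank(f⁻¹) = rank(f) − 1. -/
/-
Bring the system matrix into the shape `B` with first column `e₁` and last row `eₙᵀ`.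
Minimality forces `u₁ ≠ 0` and `vₙ ≠ 0`: otherwise deleting the first (resp. last) row and
column of `B` would represent `f` in dimension `n - 1`. Further scalar row and column operations,
which keep the shape of `B`, normalize `u = λe₁ᵀ` and `v = μeₙ`, so that `f = λμ (B⁻¹)₁ₙ`.
Deleting the last row and the first column of `B` leaves a matrix `C` that is invertible with
`(C⁻¹)ₙ₋₁,₁ = -(B⁻¹)₁ₙ⁻¹` (Jacobi's complementary minor identity), which is a linear
representation of `f⁻¹` of dimension `n - 1`. Conversely, bordering a representation `(u, A, v)`
of `g` to `[[A, v], [u, 0]]` represents `g⁻¹` in one dimension more (a Schur complement), so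
`rank f ≤ rank f⁻¹ + 1`.

Fullness of the system matrices is automatic: a matrix that becomes invertible over the division
ring `F` cannot factor through a smaller dimension, by the rank condition.
-/

open Matrix

/-- The set of dimensions of linear representations of `g`: `(u, A, v)` with
`u, v` scalar, `A` full and linear over the free algebra, invertible over `F`,
and `u A⁻¹ v = g`. -/
def repDims {K F X : Type*} [Field K] [DivisionRing F] [Algebra K F]
    (φ : FreeAlgebra K X →ₐ[K] F) (g : F) : Set ℕ :=
  {d | ∃ (u : Matrix (Fin 1) (Fin d) K) (v : Matrix (Fin d) (Fin 1) K)
      (A : Matrix (Fin d) (Fin d) (FreeAlgebra K X)),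
    (∀ i j, A i j ∈ Submodule.span K
      ({1} ∪ Set.range (FreeAlgebra.ι K) : Set (FreeAlgebra K X))) ∧
    (∀ l < d, ∀ (T : Matrix (Fin d) (Fin l) (FreeAlgebra K X))
      (U : Matrix (Fin l) (Fin d) (FreeAlgebra K X)), A ≠ T * U) ∧
    IsUnit (A.map ⇑φ) ∧
    ((u.map ⇑(algebraMap K F)) * Ring.inverse (A.map ⇑φ) *
      (v.map ⇑(algebraMap K F))) 0 0 = g}

/-- The rank of `g`: the minimal dimension of a linear representation. -/
noncomputable def freeRank {K F X : Type*} [Field K] [DivisionRing F] [Algebra K F]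
    (φ : FreeAlgebra K X →ₐ[K] F) (g : F) : ℕ :=
  sInf (repDims φ g)

open scoped Ring

theorem isUnit_and_inverse_eq_of_mul_eq_one {M₀ : Type*} [MonoidWithZero M₀]
    [IsDedekindFiniteMonoid M₀] {a b : M₀} (h : a * b = 1) : IsUnit a ∧ a⁻¹ʳ = b := by
  have ha := IsUnit.of_mul_eq_one b h
  exact ⟨ha, by rw [← Ring.inverse_mul_cancel_left a b ha, h, mul_one]⟩

namespace Matrix

theorem not_isUnit_mul_of_lt {R : Type*} [Semiring R] [RankCondition R] {d l : ℕ} (hl : l < d)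
    (T : Matrix (Fin d) (Fin l) R) (U : Matrix (Fin l) (Fin d) R) : ¬ IsUnit (T * U) := by
  rintro ⟨w, hw⟩
  have := rankCondition_iff_matrix.mp ‹_› l d (U * w.inv) T
    (by rw [← Matrix.mul_assoc, ← hw, w.val_inv])
  omega

theorem ne_mul_of_isUnit_map {S R : Type*} [Semiring S] [Semiring R] [RankCondition R]
    (φ : S →+* R) {d : ℕ} {M : Matrix (Fin d) (Fin d) S} (hM : IsUnit (M.map φ)) :
    ∀ l < d, ∀ (T : Matrix (Fin d) (Fin l) S) (U : Matrix (Fin l) (Fin d) S), M ≠ T * U := by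
  rintro l hl T U rfl
  exact not_isUnit_mul_of_lt hl _ _ (by rwa [Matrix.map_mul] at hM)

section Bordered

variable {R : Type*} {d : ℕ}

/-- The matrix `[[A, b], [c, e]]`. -/
def bordered (A : Matrix (Fin d) (Fin d) R) (b c : Fin d → R) (e : R) :
    Matrix (Fin (d + 1)) (Fin (d + 1)) R :=
  of (Fin.snoc (fun i ↦ Fin.snoc (A i) (b i)) (Fin.snoc c e))

section Entries

variable (A : Matrix (Fin d) (Fin d) R) (b c : Fin d → R) (e : R)

@[simp] theorem bordered_castSucc_castSucc (i j : Fin d) :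
    bordered A b c e i.castSucc j.castSucc = A i j := by simp [bordered]

@[simp] theorem bordered_castSucc_last (i : Fin d) :
    bordered A b c e i.castSucc (Fin.last d) = b i := by simp [bordered]

@[simp] theorem bordered_last_castSucc (j : Fin d) :
    bordered A b c e (Fin.last d) j.castSucc = c j := by simp [bordered]

@[simp] theorem bordered_last_last : bordered A b c e (Fin.last d) (Fin.last d) = e := by
  simp [bordered]

end Entries

variable [Semiring R]

theorem bordered_mul_bordered (A A' : Matrix (Fin d) (Fin d) R) (b c b' c' : Fin d → R)
    (e e' : R) :
    bordered A b c e * bordered A' b' c' e' =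
      bordered (A * A' + vecMulVec b c') (A *ᵥ b' + MulOpposite.op e' • b) (c ᵥ* A' + e • c')
        (c ⬝ᵥ b' + e * e') := by
  ext i j
  induction i using Fin.lastCases <;> induction j using Fin.lastCases <;>
    simp [mul_apply, Fin.sum_univ_castSucc, mulVec, vecMul, dotProduct, vecMulVec_apply]

theorem one_eq_bordered : (1 : Matrix (Fin (d + 1)) (Fin (d + 1)) R) = bordered 1 0 0 1 := by
  ext i j
  induction i using Fin.lastCases <;> induction j using Fin.lastCases <;>
    simp [one_apply, Fin.castSucc_ne_last, (Fin.castSucc_ne_last _).symm]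

end Bordered

section TypeOneOne

variable {R : Type*} {d : ℕ}

/-- The shape of the system matrix of a minimal representation of an element of type `(1,1)`:
first column `e₁` and last row `eₙᵀ`. -/
structure IsTypeOneOne [Zero R] [One R] (M : Matrix (Fin (d + 1)) (Fin (d + 1)) R) :
    Prop where
  col_zero : ∀ i, M i 0 = if i = 0 then 1 else 0
  row_last : ∀ j, M (Fin.last d) j = if j = Fin.last d then 1 else 0

theorem IsTypeOneOne.mul [Semiring R] {M N : Matrix (Fin (d + 1)) (Fin (d + 1)) R}
    (hM : M.IsTypeOneOne) (hN : N.IsTypeOneOne) : (M * N).IsTypeOneOne where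
  col_zero i := by simp [mul_apply, hN.col_zero, hM.col_zero]
  row_last j := by simp [mul_apply, hM.row_last, hN.row_last]

theorem IsTypeOneOne.map [Zero R] [One R] {S : Type*} [Zero S] [One S]
    {M : Matrix (Fin (d + 1)) (Fin (d + 1)) R} (hM : M.IsTypeOneOne) {f : R → S} (h₀ : f 0 = 0)
    (h₁ : f 1 = 1) : (M.map f).IsTypeOneOne where
  col_zero i := by simp [hM.col_zero, apply_ite f, h₀, h₁]
  row_last j := by simp [hM.row_last, apply_ite f, h₀, h₁]

end TypeOneOne

section Semiring

variable {R : Type*} [Semiring R]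

theorem inverse_apply_of_col {n : Type*} [Fintype n] [DecidableEq n] {W : Matrix n n R}
    (hW : IsUnit W) {q : n} (hcol : ∀ i, W i q = if i = q then 1 else 0) (i : n) :
    W⁻¹ʳ i q = if i = q then 1 else 0 := by
  simpa [mul_apply, hcol, one_apply] using congr_fun₂ (Ring.inverse_mul_cancel W hW) i q

theorem inverse_apply_of_row {n : Type*} [Fintype n] [DecidableEq n] {W : Matrix n n R}
    (hW : IsUnit W) {p : n} (hrow : ∀ j, W p j = if j = p then 1 else 0) (j : n) :
    W⁻¹ʳ p j = if j = p then 1 else 0 := by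
  simpa [mul_apply, hrow, one_apply, eq_comm] using
    congr_fun₂ (Ring.mul_inverse_cancel W hW) p j

variable {d : ℕ}

theorem mul_eq_submatrix_succAbove_mul {l o : Type*} (p : Fin (d + 1))
    (M : Matrix l (Fin (d + 1)) R) (N : Matrix (Fin (d + 1)) o R)
    (h : ∀ i j, M i p * N p j = 0) :
    M * N = M.submatrix id p.succAbove * N.submatrix p.succAbove id := by
  ext i j
  simp [mul_apply, Fin.sum_univ_succAbove _ p, h]

theorem submatrix_succAbove_mul (p : Fin (d + 1)) (M N : Matrix (Fin (d + 1)) (Fin (d + 1)) R)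
    (h : ∀ i j, M (p.succAbove i) p * N p (p.succAbove j) = 0) :
    (M * N).submatrix p.succAbove p.succAbove =
      M.submatrix p.succAbove p.succAbove * N.submatrix p.succAbove p.succAbove := by
  rw [submatrix_mul _ _ _ id _ Function.bijective_id, mul_eq_submatrix_succAbove_mul p _ _ h]
  rfl

theorem inverse_submatrix_succAbove {W : Matrix (Fin (d + 1)) (Fin (d + 1)) R} (hW : IsUnit W)
    (p : Fin (d + 1)) (h₁ : ∀ i j, W (p.succAbove i) p * W⁻¹ʳ p (p.succAbove j) = 0)
    (h₂ : ∀ i j, W⁻¹ʳ (p.succAbove i) p * W p (p.succAbove j) = 0) :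
    IsUnit (W.submatrix p.succAbove p.succAbove) ∧
      (W.submatrix p.succAbove p.succAbove)⁻¹ʳ = W⁻¹ʳ.submatrix p.succAbove p.succAbove := by
  have hinj := Fin.succAbove_right_injective (p := p)
  have h₁' := submatrix_succAbove_mul p _ _ h₁
  have h₂' := submatrix_succAbove_mul p _ _ h₂
  rw [Ring.mul_inverse_cancel W hW, submatrix_one _ hinj] at h₁'
  rw [Ring.inverse_mul_cancel W hW, submatrix_one _ hinj] at h₂'
  let w : (Matrix (Fin d) (Fin d) R)ˣ := ⟨_, _, h₁'.symm, h₂'.symm⟩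
  exact ⟨w.isUnit, Ring.inverse_unit w⟩

variable {W : Matrix (Fin (d + 1)) (Fin (d + 1)) R} (hW : IsUnit W) {p : Fin (d + 1)}
include hW

theorem mul_inverse_mul_submatrix_of_col (hcol : ∀ i, W i p = if i = p then 1 else 0)
    {l o : Type*} (U : Matrix l (Fin (d + 1)) R) (V : Matrix (Fin (d + 1)) o R)
    (hU : ∀ i, U i p = 0) :
    IsUnit (W.submatrix p.succAbove p.succAbove) ∧
      U.submatrix id p.succAbove * (W.submatrix p.succAbove p.succAbove)⁻¹ʳ *
        V.submatrix p.succAbove id = U * W⁻¹ʳ * V := by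
  have hY := inverse_apply_of_col hW hcol
  obtain ⟨hunit, hinv⟩ := inverse_submatrix_succAbove hW p
    (by simp [hcol, Fin.succAbove_ne]) (by simp [hY, Fin.succAbove_ne])
  refine ⟨hunit, ?_⟩
  rw [hinv, mul_eq_submatrix_succAbove_mul p U W⁻¹ʳ (by simp [hU]),
    mul_eq_submatrix_succAbove_mul p _ V (by simp [mul_apply, hY, Fin.succAbove_ne])]
  rfl

theorem mul_inverse_mul_submatrix_of_row (hrow : ∀ j, W p j = if j = p then 1 else 0)
    {l o : Type*} (U : Matrix l (Fin (d + 1)) R) (V : Matrix (Fin (d + 1)) o R)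
    (hV : ∀ j, V p j = 0) :
    IsUnit (W.submatrix p.succAbove p.succAbove) ∧
      U.submatrix id p.succAbove * (W.submatrix p.succAbove p.succAbove)⁻¹ʳ *
        V.submatrix p.succAbove id = U * W⁻¹ʳ * V := by
  have hY := inverse_apply_of_row hW hrow
  obtain ⟨hunit, hinv⟩ := inverse_submatrix_succAbove hW p
    (by simp [hY, Fin.succAbove_ne]) (by simp [hrow, Fin.succAbove_ne])
  refine ⟨hunit, ?_⟩
  rw [hinv, mul_eq_submatrix_succAbove_mul p (U * W⁻¹ʳ) V (by simp [hV])]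
  congr 1
  exact (mul_eq_submatrix_succAbove_mul p U (W⁻¹ʳ.submatrix id p.succAbove)
    (by simp [hY, Fin.succAbove_ne])).symm

end Semiring

section DivisionRing

variable {D : Type*} [DivisionRing D] {d : ℕ}

/-- The inverse is the Schur complement of the entry `(q, p)` in `W⁻¹`. -/
theorem inverse_submatrix_succAbove_succAbove {W : Matrix (Fin (d + 1)) (Fin (d + 1)) D}
    (hW : IsUnit W) (p q : Fin (d + 1)) (hg : W⁻¹ʳ q p ≠ 0) :
    IsUnit (W.submatrix p.succAbove q.succAbove) ∧
      (W.submatrix p.succAbove q.succAbove)⁻¹ʳ = W⁻¹ʳ.submatrix q.succAbove p.succAbove -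
        vecMulVec (fun i ↦ W⁻¹ʳ (q.succAbove i) p * (W⁻¹ʳ q p)⁻¹)
          (fun j ↦ W⁻¹ʳ q (p.succAbove j)) := by
  refine isUnit_and_inverse_eq_of_mul_eq_one ?_
  ext i j
  have h₁ := congr_fun₂ (Ring.mul_inverse_cancel W hW) (p.succAbove i) (p.succAbove j)
  have h₂ := congr_fun₂ (Ring.mul_inverse_cancel W hW) (p.succAbove i) p
  rw [mul_apply, Fin.sum_univ_succAbove _ q] at h₁ h₂
  simp only [one_apply, Fin.succAbove_right_inj, Fin.succAbove_ne, if_false] at h₁ h₂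
  simp only [mul_apply, submatrix_apply, sub_apply, vecMulVec_apply, mul_sub,
    Finset.sum_sub_distrib, ← mul_assoc, ← Finset.sum_mul, one_apply]
  rw [eq_sub_of_add_eq' h₁, eq_neg_of_add_eq_zero_right h₂, neg_mul, mul_assoc (W _ q),
    mul_inv_cancel₀ hg, mul_one]
  noncomm_ring

theorem isUnit_bordered {A : Matrix (Fin d) (Fin d) D} (hA : IsUnit A) (b c : Fin d → D)
    (hγ : c ⬝ᵥ (A⁻¹ʳ *ᵥ b) ≠ 0) :
    IsUnit (bordered A b c 0) ∧
      (bordered A b c 0)⁻¹ʳ (Fin.last d) (Fin.last d) = -(c ⬝ᵥ (A⁻¹ʳ *ᵥ b))⁻¹ := by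
  set p := A⁻¹ʳ *ᵥ b
  set γ := c ⬝ᵥ p
  have hp : A *ᵥ p = b := by rw [mulVec_mulVec, Ring.mul_inverse_cancel A hA, one_mulVec]
  -- the block inverse built from the Schur complement `-γ` of `A`
  have h := isUnit_and_inverse_eq_of_mul_eq_one (a := bordered A b c 0)
    (b := bordered (A⁻¹ʳ - vecMulVec p (γ⁻¹ • (c ᵥ* A⁻¹ʳ))) (MulOpposite.op γ⁻¹ • p)
      (γ⁻¹ • (c ᵥ* A⁻¹ʳ)) (-γ⁻¹)) ?_
  · refine ⟨h.1, ?_⟩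
    rw [h.2, bordered_last_last]
  rw [bordered_mul_bordered, one_eq_bordered]
  congr 1
  · rw [mul_sub, Ring.mul_inverse_cancel A hA, mul_vecMulVec, hp, sub_add_cancel]
  · rw [mulVec_smul, hp, ← add_smul, ← MulOpposite.op_add, add_neg_cancel, MulOpposite.op_zero,
      zero_smul]
  · rw [vecMul_sub, vecMul_vecMulVec, smul_smul, mul_inv_cancel₀ hγ, one_smul, zero_smul,
      add_zero, sub_self]
  · rw [dotProduct_smul, MulOpposite.smul_eq_mul_unop, MulOpposite.unop_op, mul_inv_cancel₀ hγ,
      zero_mul, add_zero]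

end DivisionRing

end Matrix

section Normalization

variable {K : Type*} [Field K] {k : ℕ}

theorem exists_isTypeOneOne_row_mul_eq_single (u : Matrix (Fin 1) (Fin (k + 2)) K)
    (hu : u 0 0 ≠ 0) :
    ∃ Q : Matrix (Fin (k + 2)) (Fin (k + 2)) K,
      IsUnit Q ∧ Q.IsTypeOneOne ∧ u * Q = single 0 0 (u 0 0) := by
  set r := u 0 - Pi.single 0 (u 0 0)
  have hr : r 0 = 0 := by simp [r]
  set N := vecMulVec (Pi.single (0 : Fin (k + 2)) (1 : K)) r
  have hN : N * N = 0 := by simp [N, vecMulVec_mul_vecMulVec, hr]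
  refine ⟨1 - (u 0 0)⁻¹ • N, IsUnit.of_mul_eq_one (1 + (u 0 0)⁻¹ • N) ?_,
    ⟨fun i ↦ ?_, fun j ↦ ?_⟩, ?_⟩
  · simp [mul_add, sub_mul, hN]
  · simp [N, hr, one_apply, vecMulVec_apply]
  · simp [N, one_apply, vecMulVec_apply, eq_comm]
  · rw [Matrix.mul_sub, Matrix.mul_one, Matrix.mul_smul, mul_vecMulVec]
    ext i j
    rw [Subsingleton.elim i 0]
    by_cases hj : j = 0
    · subst hj; simp [vecMulVec_apply, hr]
    · simp [vecMulVec_apply, hu, r, hj, Ne.symm hj]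

theorem exists_isTypeOneOne_mul_col_eq_single (v : Matrix (Fin (k + 2)) (Fin 1) K)
    (hv : v (Fin.last _) 0 ≠ 0) :
    ∃ P : Matrix (Fin (k + 2)) (Fin (k + 2)) K,
      IsUnit P ∧ P.IsTypeOneOne ∧ P * v = single (Fin.last _) 0 (v (Fin.last _) 0) := by
  set s := vᵀ 0 - Pi.single (Fin.last _) (v (Fin.last _) 0)
  have hs : s (Fin.last _) = 0 := by simp [s]
  set N := vecMulVec s (Pi.single (Fin.last (k + 1)) (1 : K))
  have hN : N * N = 0 := by simp [N, vecMulVec_mul_vecMulVec, hs]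
  refine ⟨1 - (v (Fin.last _) 0)⁻¹ • N,
    IsUnit.of_mul_eq_one (1 + (v (Fin.last _) 0)⁻¹ • N) ?_, ⟨fun i ↦ ?_, fun j ↦ ?_⟩, ?_⟩
  · simp [mul_add, sub_mul, hN]
  · simp [N, one_apply, vecMulVec_apply, eq_comm]
  · simp [N, hs, one_apply, vecMulVec_apply, eq_comm]
  · rw [Matrix.sub_mul, Matrix.one_mul, Matrix.smul_mul, vecMulVec_mul]
    ext i j
    rw [Subsingleton.elim j 0]
    by_cases hi : i = Fin.last _
    · subst hi; simp [vecMulVec_apply, hs]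
    · simp [vecMulVec_apply, s, hi, Ne.symm hi, mul_comm (v i 0), inv_mul_cancel_left₀ hv]

end Normalization

section Representation

variable {K F X : Type*} [Field K] [DivisionRing F] [Algebra K F]

def IsLinearMatrix {m n : Type*} (A : Matrix m n (FreeAlgebra K X)) : Prop :=
  ∀ i j, A i j ∈ Submodule.span K ({1} ∪ Set.range (FreeAlgebra.ι K) : Set (FreeAlgebra K X))

theorem IsLinearMatrix.scalar_mul_mul {d : ℕ} {A : Matrix (Fin d) (Fin d) (FreeAlgebra K X)}
    (hA : IsLinearMatrix A) (P Q : Matrix (Fin d) (Fin d) K) :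
    IsLinearMatrix (P.map (algebraMap K _) * A * Q.map (algebraMap K _)) := by
  intro i j
  simp only [mul_apply, map_apply, Finset.sum_mul]
  refine Submodule.sum_mem _ fun l _ ↦ Submodule.sum_mem _ fun m _ ↦ ?_
  rw [mul_assoc, ← Algebra.commutes, ← mul_assoc, ← map_mul, ← Algebra.smul_def]
  exact Submodule.smul_mem _ _ (hA m l)

variable (φ : FreeAlgebra K X →ₐ[K] F)

noncomputable def repValue {d : ℕ} (u : Matrix (Fin 1) (Fin d) K)
    (A : Matrix (Fin d) (Fin d) (FreeAlgebra K X)) (v : Matrix (Fin d) (Fin 1) K) : F :=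
  (u.map (algebraMap K F) * (A.map φ)⁻¹ʳ * v.map (algebraMap K F)) 0 0

theorem mem_repDims {d : ℕ} {u : Matrix (Fin 1) (Fin d) K} {v : Matrix (Fin d) (Fin 1) K}
    {A : Matrix (Fin d) (Fin d) (FreeAlgebra K X)} (hlin : IsLinearMatrix A)
    (hA : IsUnit (A.map φ)) : d ∈ repDims φ (repValue φ u A v) :=
  ⟨u, v, A, hlin, ne_mul_of_isUnit_map φ.toRingHom hA, hA, rfl⟩

theorem map_scalar_mul_mul {d : ℕ} (P Q : Matrix (Fin d) (Fin d) K)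
    (A : Matrix (Fin d) (Fin d) (FreeAlgebra K X)) :
    (P.map (algebraMap K _) * A * Q.map (algebraMap K _)).map φ =
      P.map (algebraMap K F) * A.map φ * Q.map (algebraMap K F) := by
  rw [← AlgHom.mapMatrix_apply, map_mul, map_mul]
  congr 2 <;> ext <;> simp

theorem isUnit_map_scalar_mul_mul {d : ℕ} {P Q : Matrix (Fin d) (Fin d) K}
    {A : Matrix (Fin d) (Fin d) (FreeAlgebra K X)} (hP : IsUnit P) (hQ : IsUnit Q)
    (hA : IsUnit (A.map φ)) :
    IsUnit ((P.map (algebraMap K _) * A * Q.map (algebraMap K _)).map φ) := by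
  rw [map_scalar_mul_mul]
  exact ((hP.map (algebraMap K F).mapMatrix).mul hA).mul (hQ.map (algebraMap K F).mapMatrix)

theorem repValue_scalar_mul_mul {d : ℕ} (u : Matrix (Fin 1) (Fin d) K)
    (A : Matrix (Fin d) (Fin d) (FreeAlgebra K X)) (v : Matrix (Fin d) (Fin 1) K)
    {P Q : Matrix (Fin d) (Fin d) K} (hP : IsUnit P) (hQ : IsUnit Q) (hA : IsUnit (A.map φ)) :
    repValue φ (u * Q) (P.map (algebraMap K _) * A * Q.map (algebraMap K _)) (P * v) =
      repValue φ u A v := by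
  have hP' := hP.map (algebraMap K F).mapMatrix
  have hQ' := hQ.map (algebraMap K F).mapMatrix
  simp only [RingHom.mapMatrix_apply] at hP' hQ'
  rw [repValue, repValue, map_scalar_mul_mul, Ring.inverse_mul (.inl (hP'.mul hA)),
    Ring.inverse_mul (.inl hP'), Matrix.map_mul, Matrix.map_mul]
  simp only [Matrix.mul_assoc, Ring.mul_inverse_cancel_left _ _ hQ']
  rw [← Matrix.mul_assoc (P.map (algebraMap K F))⁻¹ʳ, Ring.inverse_mul_cancel _ hP',
    Matrix.one_mul]

theorem mem_repDims_of_col {d : ℕ} {u : Matrix (Fin 1) (Fin (d + 1)) K}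
    {v : Matrix (Fin (d + 1)) (Fin 1) K} {B : Matrix (Fin (d + 1)) (Fin (d + 1)) (FreeAlgebra K X)}
    (hlin : IsLinearMatrix B) (hB : IsUnit (B.map φ)) {p : Fin (d + 1)}
    (hcol : ∀ i, B i p = if i = p then 1 else 0) (hu : u 0 p = 0) :
    d ∈ repDims φ (repValue φ u B v) := by
  obtain ⟨hunit, hval⟩ := mul_inverse_mul_submatrix_of_col hB (p := p)
    (by simp [hcol, apply_ite φ]) (u.map (algebraMap K F)) (v.map (algebraMap K F))
    (fun i ↦ by simp [Subsingleton.elim i 0, hu])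
  have := mem_repDims φ (u := u.submatrix id p.succAbove) (v := v.submatrix p.succAbove id)
    (fun _ _ ↦ hlin _ _) hunit
  convert this using 2
  exact (congr_fun₂ hval 0 0).symm

theorem mem_repDims_of_row {d : ℕ} {u : Matrix (Fin 1) (Fin (d + 1)) K}
    {v : Matrix (Fin (d + 1)) (Fin 1) K} {B : Matrix (Fin (d + 1)) (Fin (d + 1)) (FreeAlgebra K X)}
    (hlin : IsLinearMatrix B) (hB : IsUnit (B.map φ)) {p : Fin (d + 1)}
    (hrow : ∀ j, B p j = if j = p then 1 else 0) (hv : v p 0 = 0) :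
    d ∈ repDims φ (repValue φ u B v) := by
  obtain ⟨hunit, hval⟩ := mul_inverse_mul_submatrix_of_row hB (p := p)
    (by simp [hrow, apply_ite φ]) (u.map (algebraMap K F)) (v.map (algebraMap K F))
    (fun j ↦ by simp [Subsingleton.elim j 0, hv])
  have := mem_repDims φ (u := u.submatrix id p.succAbove) (v := v.submatrix p.succAbove id)
    (fun _ _ ↦ hlin _ _) hunit
  convert this using 2
  exact (congr_fun₂ hval 0 0).symm

theorem inv_mem_repDims_of_isTypeOneOne_single {k : ℕ}
    {B : Matrix (Fin (k + 2)) (Fin (k + 2)) (FreeAlgebra K X)} (hlin : IsLinearMatrix B)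
    (hB : IsUnit (B.map φ)) (hshape : B.IsTypeOneOne) (a b : K)
    (hf : repValue φ (single 0 0 a) B (single (Fin.last _) 0 b) ≠ 0) :
    k + 1 ∈ repDims φ (repValue φ (single 0 0 a) B (single (Fin.last _) 0 b))⁻¹ := by
  have hW := hshape.map (map_zero φ) (map_one φ)
  have hval : repValue φ (single 0 0 a) B (single (Fin.last _) 0 b) =
      algebraMap K F a * (B.map φ)⁻¹ʳ 0 (Fin.last _) * algebraMap K F b := by
    simp [repValue]
  rw [hval] at hf ⊢
  have hg : (B.map φ)⁻¹ʳ 0 (Fin.last _) ≠ 0 := fun h ↦ hf (by simp [h])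
  obtain ⟨hunit, hinv⟩ := inverse_submatrix_succAbove_succAbove hB (Fin.last _) 0 hg
  have hentry : ((B.map φ).submatrix Fin.castSucc Fin.succ)⁻¹ʳ (Fin.last k) 0 =
      -((B.map φ)⁻¹ʳ 0 (Fin.last _))⁻¹ := by
    rw [← Fin.succAbove_last, ← Fin.succAbove_zero, hinv]
    simp [vecMulVec_apply, inverse_apply_of_col hB hW.col_zero,
      inverse_apply_of_row hB hW.row_last]
  have := mem_repDims φ (u := single 0 (Fin.last k) (-(a * b)⁻¹)) (v := single 0 0 1)
    (A := B.submatrix (Fin.last _).succAbove (0 : Fin (k + 2)).succAbove)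
    (fun _ _ ↦ hlin _ _) hunit
  convert this using 2
  have hcomm := Algebra.commutes (A := F) a⁻¹ ((B.map φ)⁻¹ʳ 0 (Fin.last _))⁻¹
  rw [map_inv₀] at hcomm
  simp [repValue, ← submatrix_map, hentry, mul_assoc, hcomm]

theorem inv_mem_repDims_of_isTypeOneOne {k : ℕ}
    {B : Matrix (Fin (k + 2)) (Fin (k + 2)) (FreeAlgebra K X)} (hlin : IsLinearMatrix B)
    (hB : IsUnit (B.map φ)) (hshape : B.IsTypeOneOne) {u : Matrix (Fin 1) (Fin (k + 2)) K}
    {v : Matrix (Fin (k + 2)) (Fin 1) K} (hu : u 0 0 ≠ 0) (hv : v (Fin.last _) 0 ≠ 0)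
    (hf : repValue φ u B v ≠ 0) : k + 1 ∈ repDims φ (repValue φ u B v)⁻¹ := by
  obtain ⟨Q, hQ, hQs, huQ⟩ := exists_isTypeOneOne_row_mul_eq_single u hu
  obtain ⟨P, hP, hPs, hPv⟩ := exists_isTypeOneOne_mul_col_eq_single v hv
  have hval := repValue_scalar_mul_mul φ u B v hP hQ hB
  rw [huQ, hPv] at hval
  rw [← hval] at hf ⊢
  exact inv_mem_repDims_of_isTypeOneOne_single φ (hlin.scalar_mul_mul P Q)
    (isUnit_map_scalar_mul_mul φ hP hQ hB)
    (((hPs.map (map_zero _) (map_one _)).mul hshape).mul (hQs.map (map_zero _) (map_one _)))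
    _ _ hf

theorem succ_mem_repDims_inv {d : ℕ} {g : F} (hg : g ≠ 0) (h : d ∈ repDims φ g) :
    d + 1 ∈ repDims φ g⁻¹ := by
  obtain ⟨u, v, A, hlin, -, hA, rfl⟩ := h
  set M := bordered A ((v.map (algebraMap K _))ᵀ 0) (u.map (algebraMap K _) 0) 0
  have hM : M.map φ =
      bordered (A.map φ) ((v.map (algebraMap K F))ᵀ 0) (u.map (algebraMap K F) 0) 0 := by
    ext i j
    induction i using Fin.lastCases <;> induction j using Fin.lastCases <;> simp [M]
  have hγ : u.map (algebraMap K F) 0 ⬝ᵥ ((A.map φ)⁻¹ʳ *ᵥ (v.map (algebraMap K F))ᵀ 0) =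
      repValue φ u A v := by
    simp only [repValue, mul_apply, dotProduct, mulVec, Finset.mul_sum, Finset.sum_mul, mul_assoc]
    exact Finset.sum_comm
  obtain ⟨hunit, hentry⟩ := isUnit_bordered hA _ _ (by rwa [hγ])
  have halg (c : K) : algebraMap K (FreeAlgebra K X) c ∈
      Submodule.span K ({1} ∪ Set.range (FreeAlgebra.ι K) : Set (FreeAlgebra K X)) := by
    rw [Algebra.algebraMap_eq_smul_one]
    exact Submodule.smul_mem _ _ (Submodule.subset_span (by simp))
  have hlinM : IsLinearMatrix M := by
    intro i j
    induction i using Fin.lastCases <;> induction j using Fin.lastCases <;>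
      simp only [M, bordered_last_last, bordered_last_castSucc, bordered_castSucc_last,
        bordered_castSucc_castSucc, map_apply, transpose_apply]
    exacts [zero_mem _, halg _, halg _, hlin _ _]
  have := mem_repDims φ (u := single 0 (Fin.last d) (-1)) (v := single (Fin.last d) 0 1) hlinM
    (hM ▸ hunit)
  convert this using 1
  simp [repValue, hM, hentry, hγ]

end Representation

/-- If `f` is given by a minimal linear representation of dimension `n` whose
system matrix can be brought by invertible scalar matrices to a form with
first column `e₁` and last row `e_nᵀ` (type `(1,1)`), then `f⁻¹` has a linear
representation of dimension `n - 1`, and `rank f⁻¹ = rank f - 1`. -/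
theorem rank_inv_type_one_one {K F X : Type*} [Field K] [DivisionRing F] [Algebra K F]
    (φ : FreeAlgebra K X →ₐ[K] F)
    (f : F) (hf0 : f ≠ 0) {n : ℕ} (hn : 2 ≤ n)
    (u : Matrix (Fin 1) (Fin n) K) (v : Matrix (Fin n) (Fin 1) K)
    (A : Matrix (Fin n) (Fin n) (FreeAlgebra K X))
    (hlin : ∀ i j, A i j ∈ Submodule.span K
      ({1} ∪ Set.range (FreeAlgebra.ι K) : Set (FreeAlgebra K X)))
    (hA : IsUnit (A.map ⇑φ))
    (hf : ((u.map ⇑(algebraMap K F)) * Ring.inverse (A.map ⇑φ) *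
      (v.map ⇑(algebraMap K F))) 0 0 = f)
    (hmin : freeRank φ f = n)
    (P Q : Matrix (Fin n) (Fin n) K) (hP : IsUnit P) (hQ : IsUnit Q)
    (hcol : ∀ i : Fin n,
      ((P.map ⇑(algebraMap K (FreeAlgebra K X))) * A *
        (Q.map ⇑(algebraMap K (FreeAlgebra K X)))) i ⟨0, by omega⟩ =
        if i = ⟨0, by omega⟩ then 1 else 0)
    (hrow : ∀ j : Fin n,
      ((P.map ⇑(algebraMap K (FreeAlgebra K X))) * A *
        (Q.map ⇑(algebraMap K (FreeAlgebra K X)))) ⟨n - 1, by omega⟩ j =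
        if j = ⟨n - 1, by omega⟩ then 1 else 0) :
    (n - 1) ∈ repDims φ f⁻¹ ∧ freeRank φ f⁻¹ = n - 1 := by
  obtain ⟨k, rfl⟩ : ∃ k, n = k + 2 := ⟨n - 2, by omega⟩
  set B := P.map (algebraMap K (FreeAlgebra K X)) * A * Q.map (algebraMap K (FreeAlgebra K X))
  have hBlin : IsLinearMatrix B := IsLinearMatrix.scalar_mul_mul hlin P Q
  have hB : IsUnit (B.map φ) := isUnit_map_scalar_mul_mul φ hP hQ hA
  have hshape : B.IsTypeOneOne := ⟨hcol, hrow⟩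
  have hBf : repValue φ (u * Q) B (P * v) = f :=
    (repValue_scalar_mul_mul φ u A v hP hQ hA).trans hf
  have hlow {d : ℕ} (hd : d ∈ repDims φ f) : k + 2 ≤ d := hmin ▸ Nat.sInf_le hd
  have hu : (u * Q) 0 0 ≠ 0 := fun h ↦ by
    have := hlow (hBf ▸ mem_repDims_of_col φ hBlin hB hshape.col_zero h); omega
  have hv : (P * v) (Fin.last _) 0 ≠ 0 := fun h ↦ by
    have := hlow (hBf ▸ mem_repDims_of_row φ hBlin hB hshape.row_last h); omega
  have hmem : k + 1 ∈ repDims φ f⁻¹ :=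
    hBf ▸ inv_mem_repDims_of_isTypeOneOne φ hBlin hB hshape hu hv (hBf ▸ hf0)
  refine ⟨hmem, le_antisymm (Nat.sInf_le hmem) (le_csInf ⟨_, hmem⟩ fun d hd ↦ ?_)⟩
  have := hlow (by simpa using succ_mem_repDims_inv φ (inv_ne_zero hf0) hd)
  omega
end

section
/- A nonzero element f of the free field lies in the ground field K if and only if rank(f) = rank(f⁻¹) = 1. -/
/-!
A one-dimensional representation writes `g = u (φ a)⁻¹ v` with `a` affine in the generators,
so `φ a` is a nonzero scalar multiple of `g⁻¹`. If `f` and `f⁻¹` both have rank one, the affine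
elements `a, a'` so obtained satisfy `φ (a' * a) ∈ K*`, hence `a' * a` is a nonzero scalar by
injectivity of `φ`. Sending one generator to the polynomial variable and all others to `0` maps
`a'` to a unit of `K[X]` of degree at most one, so `a'` has no linear part: it is a scalar, and
then so is `f`.
-/

open Matrix

namespace FreeAlgebra

open Polynomial

variable {K σ : Type*} [CommSemiring K]

theorem exists_eq_algebraMap_add_linearCombination {a : FreeAlgebra K σ}
    (ha : a ∈ Submodule.span K ({1} ∪ Set.range (ι K) : Set (FreeAlgebra K σ))) :
    ∃ (c : K) (g : σ →₀ K), a = algebraMap K _ c + Finsupp.linearCombination K (ι K) g := by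
  rw [Submodule.span_union, Submodule.mem_sup] at ha
  obtain ⟨_, hc, _, hg, rfl⟩ := ha
  obtain ⟨c, rfl⟩ := Submodule.mem_span_singleton.mp hc
  obtain ⟨g, rfl⟩ := (Finsupp.range_linearCombination (R := K) (v := ι K)) ▸ hg
  exact ⟨c, g, by rw [Algebra.algebraMap_eq_smul_one]⟩

theorem lift_single_X_algebraMap_add_linearCombination [DecidableEq σ] (x : σ) (c : K)
    (g : σ →₀ K) :
    lift K (Pi.single x (X : K[X])) (algebraMap K _ c + Finsupp.linearCombination K (ι K) g) =
      C c + C (g x) * X := by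
  have hι : (lift K (Pi.single x (X : K[X]))).toLinearMap ∘ ι K = Pi.single x X :=
    funext (lift_ι_apply _)
  rw [map_add, AlgHom.commutes, ← AlgHom.coe_toLinearMap, Finsupp.apply_linearCombination, hι,
    Finsupp.linearCombination_single_index, algebraMap_eq, smul_eq_C_mul]

theorem mem_range_algebraMap_of_isUnit_mul [NoZeroDivisors K] {a b : FreeAlgebra K σ}
    (ha : a ∈ Submodule.span K ({1} ∪ Set.range (ι K) : Set (FreeAlgebra K σ)))
    (hab : IsUnit (a * b)) : a ∈ Set.range (algebraMap K (FreeAlgebra K σ)) := by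
  classical
  obtain ⟨c, g, rfl⟩ := exists_eq_algebraMap_add_linearCombination ha
  suffices g = 0 by exact ⟨c, by simp [this]⟩
  ext x
  have hunit := hab.map (lift K (Pi.single x (X : K[X])))
  rw [map_mul, lift_single_X_algebraMap_add_linearCombination] at hunit
  replace hunit := isUnit_of_mul_isUnit_left hunit
  simpa using congrArg (coeff · 1) (eq_C_of_natDegree_eq_zero (natDegree_eq_zero_of_isUnit hunit))

end FreeAlgebra

section Rank

variable {K F σ : Type*} [Field K] [DivisionRing F] [Algebra K F]
  (φ : FreeAlgebra K σ →ₐ[K] F)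

theorem zero_notMem_repDims {g : F} (hg : g ≠ 0) : 0 ∉ repDims φ g := by
  rintro ⟨u, v, A, -, -, -, rfl⟩
  simp [Matrix.mul_apply] at hg

theorem one_mem_repDims_algebraMap (c : K) : 1 ∈ repDims φ (algebraMap K F c) := by
  refine ⟨.of fun _ _ => c, .of fun _ _ => 1, 1, fun i j => ?_, fun l hl T U h => ?_, ?_, ?_⟩
  · rw [Subsingleton.elim i j, Matrix.one_apply_eq]
    exact Submodule.subset_span (Or.inl rfl)
  · obtain rfl : l = 0 := by omega
    simpa [Matrix.mul_apply] using congr_fun₂ h 0 0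
  · simp
  · simp [Matrix.mul_apply]

theorem freeRank_eq_one_iff {g : F} (hg : g ≠ 0) : freeRank φ g = 1 ↔ 1 ∈ repDims φ g := by
  refine ⟨fun h => h ▸ Nat.sInf_mem (Nat.nonempty_of_sInf_eq_succ h), fun h => ?_⟩
  refine le_antisymm (Nat.sInf_le h) (Nat.one_le_iff_ne_zero.mpr fun h0 => ?_)
  exact zero_notMem_repDims φ hg (h0 ▸ Nat.sInf_mem ⟨1, h⟩)

theorem exists_mem_span_eq_smul_inv_of_one_mem_repDims {g : F} (hg : g ≠ 0)
    (h : 1 ∈ repDims φ g) :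
    ∃ a ∈ Submodule.span K ({1} ∪ Set.range (FreeAlgebra.ι K) : Set (FreeAlgebra K σ)),
      ∃ k : K, k ≠ 0 ∧ φ a = k • g⁻¹ := by
  obtain ⟨u, v, A, hA, -, hunit, rfl⟩ := h
  have hinv : Ring.inverse (A.map φ) 0 0 = (φ (A 0 0))⁻¹ := by
    refine eq_inv_of_mul_eq_one_right ?_
    simpa [Matrix.mul_apply] using congr_fun₂ (Ring.mul_inverse_cancel (A.map φ) hunit) 0 0
  have hval : (u.map (algebraMap K F) * Ring.inverse (A.map φ) * v.map (algebraMap K F)) 0 0 =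
      algebraMap K F (u 0 0 * v 0 0) * (φ (A 0 0))⁻¹ := by
    simp only [Matrix.mul_apply, Fin.sum_univ_one, Matrix.map_apply, hinv]
    rw [mul_assoc, ← Algebra.commutes, ← mul_assoc, map_mul]
  rw [hval] at hg ⊢
  have hk : u 0 0 * v 0 0 ≠ 0 := by rintro h; simp [h] at hg
  refine ⟨A 0 0, hA 0 0, _, hk, ?_⟩
  rw [_root_.mul_inv_rev, inv_inv, Algebra.smul_def, ← mul_assoc, Algebra.commutes, mul_assoc,
    mul_inv_cancel₀ (by simpa using hk), mul_one]

end Rank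

theorem mem_ground_field_iff_rank_one_general {K F X : Type*} [Field K] [DivisionRing F] [Algebra K F]
    (φ : FreeAlgebra K X →ₐ[K] F) (hinj : Function.Injective φ)
    (f : F) (hf : f ≠ 0) :
    f ∈ Set.range ⇑(algebraMap K F) ↔ freeRank φ f = 1 ∧ freeRank φ f⁻¹ = 1 := by
  rw [freeRank_eq_one_iff φ hf, freeRank_eq_one_iff φ (inv_ne_zero hf)]
  constructor
  · rintro ⟨c, rfl⟩
    exact ⟨one_mem_repDims_algebraMap φ c,
      map_inv₀ (algebraMap K F) c ▸ one_mem_repDims_algebraMap φ c⁻¹⟩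
  · rintro ⟨h, h'⟩
    obtain ⟨a, ha, k, hk, hφa⟩ := exists_mem_span_eq_smul_inv_of_one_mem_repDims φ hf h
    obtain ⟨a', ha', k', hk', hφa'⟩ :=
      exists_mem_span_eq_smul_inv_of_one_mem_repDims φ (inv_ne_zero hf) h'
    rw [inv_inv] at hφa'
    have hprod : a' * a = algebraMap K _ (k' * k) := hinj <| by
      rw [map_mul, hφa', hφa, smul_mul_smul, mul_inv_cancel₀ hf, AlgHom.commutes,
        Algebra.algebraMap_eq_smul_one]
    obtain ⟨c, rfl⟩ := FreeAlgebra.mem_range_algebraMap_of_isUnit_mul ha'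
      (hprod ▸ (Ne.isUnit (mul_ne_zero hk' hk)).map _)
    refine ⟨k'⁻¹ * c, ?_⟩
    rw [AlgHom.commutes] at hφa'
    rw [map_mul, ← Algebra.smul_def, hφa', inv_smul_smul₀ hk']

/-- A nonzero element `f` of the free field lies in the ground field `K` if
and only if `rank f = rank f⁻¹ = 1`. -/
theorem mem_ground_field_iff_rank_one {K F X : Type*} [Field K] [DivisionRing F] [Algebra K F]
    (φ : FreeAlgebra K X →ₐ[K] F) (hinj : Function.Injective φ)
    (hfullinv : ∀ (m : ℕ) (M : Matrix (Fin m) (Fin m) (FreeAlgebra K X)),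
      (∀ l < m, ∀ (T : Matrix (Fin m) (Fin l) (FreeAlgebra K X))
        (U : Matrix (Fin l) (Fin m) (FreeAlgebra K X)), M ≠ T * U) →
      IsUnit (M.map ⇑φ))
    (f : F) (hf : f ≠ 0) :
    f ∈ Set.range ⇑(algebraMap K F) ↔ freeRank φ f = 1 ∧ freeRank φ f⁻¹ = 1 :=
  mem_ground_field_iff_rank_one_general φ hinj f hf
end
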